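/- arXiv:0910.2989 — 7 statements merged into one kernel-verified Lean document; each statement's English description precedes it below -/
import Mathlib

section
/- Assume Schanuel's conjecture for ℂ. Then exp is injective on the algebraic numbers: if a and b are algebraic complex numbers with exp(a) = exp(b), then a = b. -/
def SchanuelConjecture : Prop :=
  ∀ (n : ℕ) (z : Fin n → ℂ), LinearIndependent ℚ z →
    ∃ s : Finset (Fin n ⊕ Fin n), n ≤ s.card ∧
      AlgebraicIndependent ℚ
        (fun i : s => Sum.elim z (fun j => Complex.exp (z j)) i)

theorem SchanuelConjecture.transcendental_or_transcendental_exp (hSch : SchanuelConjecture)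
    {z : ℂ} (hz : z ≠ 0) : Transcendental ℚ z ∨ Transcendental ℚ (Complex.exp z) := by
  obtain ⟨s, hcard, hind⟩ :=
    hSch 1 (fun _ => z) (LinearIndependent.of_subsingleton 0 hz)
  obtain ⟨i, hi⟩ : s.Nonempty := Finset.card_pos.mp (by omega)
  have htrans := hind.transcendental ⟨i, hi⟩
  rcases i with _ | _
  · exact Or.inl htrans
  · exact Or.inr htrans

theorem exp_injective_on_algebraic (hSch : SchanuelConjecture)
    (a b : ℂ) (ha : IsAlgebraic ℚ a) (hb : IsAlgebraic ℚ b)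
    (h : Complex.exp a = Complex.exp b) : a = b := by
  by_contra hne
  have hsub_alg : IsAlgebraic ℚ (a - b) := ha.sub hb
  have hexp_alg : IsAlgebraic ℚ (Complex.exp (a - b)) := by
    rw [Complex.exp_sub, h, div_self (Complex.exp_ne_zero b)]
    exact isAlgebraic_one
  rcases hSch.transcendental_or_transcendental_exp (sub_ne_zero.mpr hne) with htr | htr
  · exact htr hsub_alg
  · exact htr hexp_alg
end

section
/- Assume Schanuel's conjecture for ℂ. If a and b are algebraic complex numbers with exp(exp(a)) = exp(exp(b)), then a = b. -/
/-!
Put `t = exp a - exp b`, so that `exp t = 1`. The group `ℤa + ℤb` is free on a basis `u₁, …, u_k`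
of algebraic numbers that is linearly independent over `ℚ`, and `exp a`, `exp b` lie in the field
`ℚ(exp u₁, …, exp u_k)`. If `t ≠ 0`, Schanuel's conjecture for `t` alone makes `t` transcendental,
so `t, u₁, …, u_k` are linearly independent over `ℚ`. Among `t, uᵢ, exp t = 1, exp uᵢ` only `t` and
the `exp uᵢ` can be transcendental, so Schanuel's conjecture makes these `k + 1` numbers
algebraically independent, contradicting `t ∈ ℚ(exp u₁, …, exp u_k)`. Hence `exp a = exp b`, and
then `a - b` is an algebraic number with `exp (a - b) = 1`, so it vanishes.
-/

open Set Submodule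

theorem isAlgebraic_of_mem_span {K A : Type*} [Field K] [CommRing A] [Algebra K A] {S : Set A}
    (hS : ∀ s ∈ S, IsAlgebraic K s) {x : A} (hx : x ∈ span K S) : IsAlgebraic K x :=
  span_le (p := Subalgebra.toSubmodule (Subalgebra.algebraicClosure K A)).2 hS hx

theorem linearIndependent_finCons_of_transcendental {K A : Type*} [Field K] [CommRing A]
    [Algebra K A] {n : ℕ} {v : Fin n → A} (hv : LinearIndependent K v)
    (hvalg : ∀ i, IsAlgebraic K (v i)) {t : A} (ht : Transcendental K t) :
    LinearIndependent K (Fin.cons t v : Fin (n + 1) → A) :=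
  linearIndependent_finCons.2 ⟨hv, fun hmem => ht <|
    isAlgebraic_of_mem_span (by simpa [forall_mem_range] using hvalg) hmem⟩

theorem AlgebraicIndepOn.of_card_le_of_isAlgebraic {ι R A : Type*} [CommRing R] [CommRing A]
    [Algebra R A] {x : ι → A} {s T : Finset ι} (hs : AlgebraicIndepOn R x s)
    (halg : ∀ i ∉ T, IsAlgebraic R (x i)) (hcard : T.card ≤ s.card) :
    AlgebraicIndepOn R x T := by
  have hsT : s ⊆ T := fun i hi => by
    by_contra hiT
    exact hs.transcendental ⟨i, hi⟩ (halg i hiT)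
  rwa [← Finset.eq_of_subset_of_card_le hsT hcard]

theorem exists_linearIndependent_rat_span_int_eq {V : Type*} [AddCommGroup V] [Module ℚ V]
    {S : Set V} (hS : S.Finite) :
    ∃ (k : ℕ) (u : Fin k → V), LinearIndependent ℚ u ∧ span ℤ (range u) = span ℤ S := by
  have : IsAddTorsionFree V := .of_module_rat V
  let M := span ℤ S
  have : Module.Finite ℤ M := Module.Finite.span_of_finite ℤ hS
  let b := Module.finBasis ℤ M
  refine ⟨_, M.subtype ∘ b, ?_, ?_⟩
  · rw [← LinearIndependent.iff_fractionRing ℤ ℚ]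
    exact b.linearIndependent.map' M.subtype M.ker_subtype
  · rw [range_comp, span_image, b.span_eq, Submodule.map_top, range_subtype]

theorem Complex.exp_mem_adjoin_exp_of_mem_span_int (K : Type*) [Field K] [Algebra K ℂ]
    {S : Set ℂ} {x : ℂ} (hx : x ∈ span ℤ S) :
    Complex.exp x ∈ IntermediateField.adjoin K (Complex.exp '' S) := by
  induction hx using span_induction with
  | mem x hx => exact IntermediateField.subset_adjoin K _ (mem_image_of_mem _ hx)
  | zero => simp
  | add x y _ _ hx hy => simpa [Complex.exp_add] using mul_mem hx hy
  | smul n x _ hx => simpa [Complex.exp_int_mul] using zpow_mem hx n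

namespace SchanuelConjecture

variable (hSch : SchanuelConjecture)
include hSch

theorem algebraicIndepOn {n : ℕ} {z : Fin n → ℂ} (hz : LinearIndependent ℚ z)
    {T : Finset (Fin n ⊕ Fin n)} (hT : T.card ≤ n)
    (halg : ∀ i ∉ T, IsAlgebraic ℚ (Sum.elim z (fun j => Complex.exp (z j)) i)) :
    AlgebraicIndepOn ℚ (Sum.elim z (fun j => Complex.exp (z j))) T := by
  obtain ⟨s, hs, hind⟩ := hSch n z hz
  exact AlgebraicIndepOn.of_card_le_of_isAlgebraic hind halg (hT.trans hs)

theorem transcendental_algebra_adjoin_exp {k : ℕ} {t : ℂ} {u : Fin k → ℂ}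
    (hli : LinearIndependent ℚ (Fin.cons t u : Fin (k + 1) → ℂ))
    (halg : ∀ i, IsAlgebraic ℚ (u i)) (het : Complex.exp t = 1) :
    Transcendental (Algebra.adjoin ℚ (range fun i => Complex.exp (u i))) t := by
  set z : Fin (k + 1) → ℂ := Fin.cons t u
  set T : Finset (Fin (k + 1) ⊕ Fin (k + 1)) :=
    insert (.inl 0) (Finset.univ.image (Sum.inr ∘ Fin.succ))
  have hT : T.card ≤ k + 1 :=
    (Finset.card_insert_le _ _).trans <| by
      simpa using (Finset.card_image_le (s := Finset.univ) (f := Sum.inr ∘ Fin.succ))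
  have hind := hSch.algebraicIndepOn hli hT <| by
    rintro (i | i) hi <;> induction i using Fin.cases <;> simp_all [T, z, isAlgebraic_one]
  rw [Finset.coe_insert, Finset.coe_image, Finset.coe_univ, image_univ,
    AlgebraicIndepOn.insert_iff (by simp)] at hind
  have himage : Sum.elim z (fun j => Complex.exp (z j)) ''
      range (Sum.inr ∘ Fin.succ) = range fun i => Complex.exp (u i) := by
    rw [← range_comp]
    rfl
  rw [himage] at hind
  exact hind.2

theorem transcendental_of_exp_eq_one {t : ℂ} (ht : t ≠ 0) (het : Complex.exp t = 1) :
    Transcendental ℚ t := by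
  have hli : LinearIndependent ℚ (Fin.cons t Fin.elim0 : Fin 1 → ℂ) :=
    linearIndependent_finCons.2 ⟨linearIndependent_empty_type, by simpa using ht⟩
  exact (hSch.transcendental_algebra_adjoin_exp hli (·.elim0) het).restrictScalars
    (algebraMap ℚ _).injective

theorem transcendental_adjoin_exp {S : Set ℂ} (hS : S.Finite)
    (halg : ∀ s ∈ S, IsAlgebraic ℚ s) {t : ℂ} (ht : t ≠ 0) (het : Complex.exp t = 1) :
    Transcendental (IntermediateField.adjoin ℚ (Complex.exp '' S)) t := by
  obtain ⟨k, u, hu, hspan⟩ := exists_linearIndependent_rat_span_int_eq hS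
  have hualg (i : Fin k) : IsAlgebraic ℚ (u i) :=
    isAlgebraic_of_mem_span halg <| span_le_restrictScalars ℤ ℚ S <|
      hspan ▸ subset_span (mem_range_self i)
  have hli := linearIndependent_finCons_of_transcendental hu hualg
    (hSch.transcendental_of_exp_eq_one ht het)
  have htr := IntermediateField.transcendental_adjoin_iff.2
    (hSch.transcendental_algebra_adjoin_exp hli hualg het)
  have hle : IntermediateField.adjoin ℚ (Complex.exp '' S) ≤
      IntermediateField.adjoin ℚ (range fun i => Complex.exp (u i)) := by
    rw [IntermediateField.adjoin_le_iff, range_comp' Complex.exp u]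
    rintro _ ⟨s, hs, rfl⟩
    exact Complex.exp_mem_adjoin_exp_of_mem_span_int ℚ (hspan ▸ subset_span hs)
  exact htr.of_tower_top_of_subalgebra_le (IntermediateField.toSubalgebra_le_toSubalgebra.2 hle)

end SchanuelConjecture

theorem exp_exp_injective_on_algebraic (hSch : SchanuelConjecture)
    (a b : ℂ) (ha : IsAlgebraic ℚ a) (hb : IsAlgebraic ℚ b)
    (h : Complex.exp (Complex.exp a) = Complex.exp (Complex.exp b)) : a = b := by
  have hexp : Complex.exp a = Complex.exp b := by
    by_contra hne
    set F := IntermediateField.adjoin ℚ (Complex.exp '' {a, b})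
    have hmem : Complex.exp a - Complex.exp b ∈ F :=
      sub_mem (IntermediateField.subset_adjoin ℚ _ (mem_image_of_mem _ (by simp)))
        (IntermediateField.subset_adjoin ℚ _ (mem_image_of_mem _ (by simp)))
    have htr : Transcendental F (Complex.exp a - Complex.exp b) := by
      refine hSch.transcendental_adjoin_exp (toFinite _) (by simp [ha, hb])
        (sub_ne_zero.2 hne) ?_
      rw [Complex.exp_sub, h, div_self (Complex.exp_ne_zero _)]
    exact htr (isAlgebraic_algebraMap (⟨_, hmem⟩ : F))
  by_contra hab
  refine hSch.transcendental_of_exp_eq_one (sub_ne_zero.2 hab) ?_ (ha.sub hb)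
  rw [Complex.exp_sub, hexp, div_self (Complex.exp_ne_zero _)]
end

section
/- Assume Schanuel's conjecture for ℂ. Then for every nonzero algebraic number α, the numbers exp(α) and exp(exp(α)) are algebraically independent over ℚ; in particular exp(exp(α)) is transcendental. -/
/-! Schanuel, applied to the single number `α`, shows that `exp α` is transcendental; hence `α`
and `exp α` are `ℚ`-linearly independent, and Schanuel applied to them yields two algebraically
independent numbers among `α, exp α, exp (exp α)`. As `α` is algebraic, these can only be `exp α`
and `exp (exp α)`. -/

open Set Complex

theorem SchanuelConjecture.exists_algebraicIndependent_subset (hSch : SchanuelConjecture)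
    {n : ℕ} {z : Fin n → ℂ} (hz : LinearIndependent ℚ z) :
    ∃ t : Set ℂ, t ⊆ range z ∪ range (exp ∘ z) ∧ n ≤ t.ncard ∧
      AlgebraicIndependent ℚ ((↑) : t → ℂ) := by
  obtain ⟨s, hcard, hs⟩ := hSch n z hz
  refine ⟨_, ?_, ?_, hs.to_subtype_range⟩
  · rw [← Set.Sum.elim_range]
    exact range_comp_subset_range _ _
  · rwa [ncard_range_of_injective hs.injective, Nat.card_eq_fintype_card, Fintype.card_coe]

theorem AlgebraicIndependent.notMem_of_isAlgebraic {R A : Type*} [CommRing R] [CommRing A]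
    [Algebra R A] {t : Set A} (ht : AlgebraicIndependent R ((↑) : t → A)) {a : A}
    (ha : IsAlgebraic R a) : a ∉ t :=
  fun hat => ht.transcendental ⟨a, hat⟩ ha

theorem linearIndependent_pair_of_isAlgebraic_of_transcendental {K A : Type*} [Field K]
    [Ring A] [Algebra K A] {a b : A} (ha : IsAlgebraic K a) (ha0 : a ≠ 0)
    (hb : Transcendental K b) : LinearIndependent K ![a, b] :=
  (LinearIndependent.pair_iff' ha0).2 fun r hr => hb (hr ▸ ha.smul r)

theorem AlgebraicIndependent.pair_of_subset_of_two_le_ncard {R A : Type*} [CommRing R] [CommRing A]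
    [Algebra R A] {t : Set A} (ht : AlgebraicIndependent R ((↑) : t → A)) {a b : A}
    (hsub : t ⊆ {a, b}) (hcard : 2 ≤ t.ncard) : AlgebraicIndependent R ![a, b] := by
  have hab : a ≠ b := by
    rintro rfl
    have := ncard_le_ncard hsub
    rw [pair_eq_singleton, ncard_singleton] at this
    omega
  have hinj : Function.Injective ![a, b] := by
    simpa [Fin.cons_injective_iff] using hab
  have : t = range ![a, b] := by
    rw [Matrix.range_cons_cons_empty]
    exact eq_of_subset_of_ncard_le hsub (by rwa [ncard_pair hab])
  subst this
  exact (algebraicIndependent_subtype_range hinj).1 ht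

theorem SchanuelConjecture.transcendental_exp (hSch : SchanuelConjecture) {α : ℂ}
    (hα : IsAlgebraic ℚ α) (hne : α ≠ 0) : Transcendental ℚ (exp α) := by
  obtain ⟨t, hsub, hcard, ht⟩ := hSch.exists_algebraicIndependent_subset
    (z := ![α]) (linearIndependent_unique_iff.2 hne)
  obtain ⟨x, hx⟩ := nonempty_of_ncard_ne_zero (by omega : t.ncard ≠ 0)
  have hxα : x ≠ α := fun h => ht.notMem_of_isAlgebraic hα (h ▸ hx)
  have : exp α = x := by simpa [hxα] using hsub hx
  exact this ▸ ht.transcendental ⟨x, hx⟩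

theorem exp_exp_alg_indep (hSch : SchanuelConjecture)
    (α : ℂ) (hα : IsAlgebraic ℚ α) (hne : α ≠ 0) :
    AlgebraicIndependent ℚ ![Complex.exp α, Complex.exp (Complex.exp α)] ∧
      Transcendental ℚ (Complex.exp (Complex.exp α)) := by
  have hexp := hSch.transcendental_exp hα hne
  obtain ⟨t, hsub, hcard, ht⟩ := hSch.exists_algebraicIndependent_subset
    (linearIndependent_pair_of_isAlgebraic_of_transcendental hα hne hexp)
  have hαt := ht.notMem_of_isAlgebraic hα
  have hsub' : t ⊆ {exp α, exp (exp α)} := fun x hx => by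
    have hxα : x ≠ α := fun h => hαt (h ▸ hx)
    have := hsub hx
    simp only [Matrix.range_cons_cons_empty, range_comp, image_pair, mem_union, mem_insert_iff,
      mem_singleton_iff, hxα, false_or] at this ⊢
    tauto
  have hpair := ht.pair_of_subset_of_two_le_ncard hsub' hcard
  exact ⟨hpair, hpair.transcendental 1⟩
end

section
/- Assume Schanuel's conjecture for ℂ. Let a₁,…,aₘ ∈ ℚ̄[x] be polynomials with algebraic coefficients and g₁,…,gₘ ∈ ℚ̄[x] be pairwise distinct polynomials with algebraic coefficients, and set p(z) = Σᵢ aᵢ(z)·exp(gᵢ(z)). If β is an algebraic number with p(β) = 0, then either aᵢ(β) = 0 for all i, or there exist i ≠ j with gᵢ(β) = gⱼ(β). -/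
open Function Polynomial

theorem Polynomial.isAlgebraic_eval {K L : Type*} [Field K] [Field L] [Algebra K L] {p : L[X]}
    (hp : ∀ k, IsAlgebraic K (p.coeff k)) {x : L} (hx : IsAlgebraic K x) :
    IsAlgebraic K (p.eval x) := by
  simp only [← mem_algebraicClosure_iff] at hp hx ⊢
  rw [eval_eq_sum_range]
  exact sum_mem fun k _ => mul_mem (hp k) (pow_mem hx k)

namespace AlgebraicIndependent

variable {σ K A : Type*} [CommRing K] {t : σ → A}

theorem linearIndependent_monomials [CommRing A] [Algebra K A] (ht : AlgebraicIndependent K t) :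
    LinearIndependent K fun d : σ →₀ ℕ => d.prod fun j e => t j ^ e := by
  have heq : (fun d : σ →₀ ℕ => d.prod fun j e => t j ^ e) =
      (MvPolynomial.aeval t).toLinearMap ∘ MvPolynomial.basisMonomials σ K := by
    funext d
    simp [MvPolynomial.aeval_monomial]
  rw [heq]
  exact (MvPolynomial.basisMonomials σ K).linearIndependent.map' _ (LinearMap.ker_eq_bot.mpr ht)

theorem linearIndependent_prod_zpow [Fintype σ] [Nontrivial K] [Field A] [Algebra K A]
    (ht : AlgebraicIndependent K t) :
    LinearIndependent K fun c : σ → ℤ => ∏ j, t j ^ c j := by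
  rw [linearIndependent_iff_finset_linearIndependent]
  intro s
  obtain ⟨b, hb⟩ : ∃ b : ℤ, ∀ c ∈ s, ∀ j, b ≤ c j := by
    obtain ⟨b, hb⟩ := Finite.bddBelow_range fun cj : s × σ => cj.1.1 cj.2
    exact ⟨b, fun c hc j => hb ⟨(⟨c, hc⟩, j), rfl⟩⟩
  -- on `s`, `∏ t ^ c = ∏ t ^ b * ∏ t ^ (c - b)` with natural exponents `c - b`
  let shift : s → σ →₀ ℕ := fun c => Finsupp.equivFunOnFinite.symm fun j => (c.1 j - b).toNat
  have hshift : Injective shift := by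
    intro c c' h
    ext j
    have := DFunLike.congr_fun h j
    simp only [shift, Finsupp.coe_equivFunOnFinite_symm] at this
    have := hb c c.2 j
    have := hb c' c'.2 j
    omega
  have hu : ∏ j, t j ^ b ≠ 0 := Finset.prod_ne_zero_iff.mpr fun j _ => zpow_ne_zero _ (ht.ne_zero j)
  have heq : (fun c : σ → ℤ => ∏ j, t j ^ c j) ∘ Subtype.val =
      LinearMap.mulLeft K (∏ j, t j ^ b) ∘ (fun d : σ →₀ ℕ => d.prod fun j e => t j ^ e) ∘ shift := by
    funext c
    simp only [comp_apply, LinearMap.mulLeft_apply, shift, Finsupp.coe_equivFunOnFinite_symm,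
      Finsupp.prod_fintype _ _ (fun _ => pow_zero _), ← Finset.prod_mul_distrib]
    refine Finset.prod_congr rfl fun j _ => ?_
    rw [← zpow_natCast, Int.toNat_of_nonneg (sub_nonneg.mpr (hb c c.2 j)),
      ← zpow_add₀ (ht.ne_zero j), add_sub_cancel]
  rw [heq]
  exact (ht.linearIndependent_monomials.comp shift hshift).map' _
    (LinearMap.ker_eq_bot.mpr (mul_right_injective₀ hu))

end AlgebraicIndependent

namespace SchanuelConjecture

variable (hSch : SchanuelConjecture)
include hSch

theorem algebraicIndependent_exp {n : ℕ} {z : Fin n → ℂ} (hli : LinearIndependent ℚ z)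
    (halg : ∀ j, IsAlgebraic ℚ (z j)) : AlgebraicIndependent ℚ fun j => Complex.exp (z j) := by
  obtain ⟨s, hcard, hindep⟩ := hSch n z hli
  have hs : s = Finset.univ.map .inr := by
    refine Finset.eq_of_subset_of_card_le ?_ (by simpa using hcard)
    rintro (j | j) hj
    · exact absurd (halg j) (hindep.transcendental ⟨_, hj⟩)
    · simp
  have hinr : ∀ j, Sum.inr j ∈ s := by simp [hs]
  exact hindep.comp (fun j => ⟨.inr j, hinr j⟩) fun j j' h => Sum.inr_injective congr($h.1)

theorem linearIndependent_exp_of_isAlgebraic (Λ : Submodule ℤ ℂ) [Module.Finite ℤ Λ]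
    (hΛ : ∀ v ∈ Λ, IsAlgebraic ℚ v) :
    LinearIndependent (algebraicClosure ℚ ℂ) fun v : Λ => Complex.exp v := by
  let b := Module.finBasis ℤ Λ
  have hli : LinearIndependent ℚ fun j => (b j : ℂ) := by
    rw [← LinearIndependent.iff_fractionRing ℤ ℚ]
    exact b.linearIndependent.map' Λ.subtype Λ.ker_subtype
  -- instance search finds the `ℚ`-algebra structure `DivisionRing.toRatAlgebra` on `ℚ̄`
  have : Algebra.IsAlgebraic ℚ (algebraicClosure ℚ ℂ) := algebraicClosure.isAlgebraic ℚ ℂ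
  have hexp := ((hSch.algebraicIndependent_exp hli fun j => hΛ _ (b j).2).extendScalars
    (algebraicClosure ℚ ℂ)).linearIndependent_prod_zpow
  have heq : (fun v : Λ => Complex.exp v) =
      (fun c => ∏ j, Complex.exp (b j) ^ c j) ∘ b.equivFun := by
    funext v
    have hv : (v : ℂ) = ∑ j, (b.equivFun v j : ℂ) * b j := by
      conv_lhs => rw [← b.sum_equivFun v]
      simp only [Submodule.coe_sum, Submodule.coe_smul, zsmul_eq_mul]
    simp only [hv, Complex.exp_sum, Complex.exp_int_mul, comp_apply]
  rw [heq]
  exact hexp.comp _ b.equivFun.injective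

theorem linearIndependent_exp_algebraicClosure :
    LinearIndependent (algebraicClosure ℚ ℂ) fun x : algebraicClosure ℚ ℂ => Complex.exp x := by
  rw [linearIndependent_iff_finset_linearIndependent]
  intro s
  let Λ := Submodule.span ℤ ((↑) '' (s : Set (algebraicClosure ℚ ℂ)) : Set ℂ)
  have : Module.Finite ℤ Λ := Module.Finite.span_of_finite ℤ (s.finite_toSet.image _)
  have hΛ : Λ ≤ (algebraicClosure ℚ ℂ).toSubalgebra.toSubmodule.restrictScalars ℤ :=
    Submodule.span_le.mpr (Set.image_subset_iff.mpr fun x _ => x.2)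
  let ι : s → Λ := fun x => ⟨x.1, Submodule.subset_span ⟨x.1, x.2, rfl⟩⟩
  have hι : Injective ι := fun x y h => Subtype.ext (Subtype.ext congr($h.1))
  exact (hSch.linearIndependent_exp_of_isAlgebraic Λ
    fun v hv => mem_algebraicClosure_iff.mp (hΛ hv)).comp ι hι

end SchanuelConjecture

theorem collapsing_at_algebraic_zeros_general (hSch : SchanuelConjecture)
    (m : ℕ) (a g : Fin m → Polynomial ℂ)
    (ha : ∀ i k, IsAlgebraic ℚ ((a i).coeff k))
    (hg : ∀ i k, IsAlgebraic ℚ ((g i).coeff k))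
    (β : ℂ) (hβ : IsAlgebraic ℚ β)
    (hzero : ∑ i, (a i).eval β * Complex.exp ((g i).eval β) = 0) :
    (∀ i, (a i).eval β = 0) ∨ ∃ i j, i ≠ j ∧ (g i).eval β = (g j).eval β := by
  by_contra! h
  obtain ⟨⟨i₀, hi₀⟩, hγ⟩ := h
  let γ : Fin m → algebraicClosure ℚ ℂ := fun i =>
    ⟨(g i).eval β, mem_algebraicClosure_iff.mpr (isAlgebraic_eval (hg i) hβ)⟩
  let α : Fin m → algebraicClosure ℚ ℂ := fun i =>
    ⟨(a i).eval β, mem_algebraicClosure_iff.mpr (isAlgebraic_eval (ha i) hβ)⟩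
  have hγinj : Injective γ := fun i j h => not_imp_not.mp (hγ i j) congr($h.1)
  have hα := Fintype.linearIndependent_iff.mp
    (hSch.linearIndependent_exp_algebraicClosure.comp γ hγinj) α hzero i₀
  exact hi₀ congr($hα.1)

theorem collapsing_at_algebraic_zeros (hSch : SchanuelConjecture)
    (m : ℕ) (a g : Fin m → Polynomial ℂ)
    (ha : ∀ i k, IsAlgebraic ℚ ((a i).coeff k))
    (hg : ∀ i k, IsAlgebraic ℚ ((g i).coeff k))
    (hgdist : ∀ i j, i ≠ j → g i ≠ g j)
    (β : ℂ) (hβ : IsAlgebraic ℚ β)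
    (hzero : ∑ i, (a i).eval β * Complex.exp ((g i).eval β) = 0) :
    (∀ i, (a i).eval β = 0) ∨ ∃ i j, i ≠ j ∧ (g i).eval β = (g j).eval β :=
  collapsing_at_algebraic_zeros_general hSch m a g ha hg β hβ hzero
end

section
/- Assume Schanuel's conjecture for ℂ. Let a₁,…,aₘ and b₁,…,bₘ be algebraic numbers with the bᵢ pairwise distinct and not all aᵢ equal to zero. If β is a nonzero algebraic number then Σᵢ aᵢ·exp(bᵢ·β) ≠ 0. Consequently the function p(z) = Σᵢ aᵢ e^{bᵢ z} has at most one algebraic zero, namely possibly 0. -/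
/-!
Let u be a ℤ-basis of the subgroup of ℂ generated by the numbers bᵢβ. The uⱼ are ℚ-linearly
independent algebraic numbers, so by Schanuel's conjecture the exp uⱼ are algebraically independent
over ℚ, hence also over the algebraic numbers. Each exp (bᵢβ) is a Laurent monomial in the exp uⱼ,
and these monomials are distinct because the bᵢβ are; so the exp (bᵢβ) are linearly independent
over the algebraic numbers.
-/

open Function Set Submodule

theorem AlgebraicIndependent.linearIndependent_prod_pow {σ R A : Type*} [CommRing R] [CommRing A]
    [Algebra R A] [Fintype σ] {t : σ → A} (ht : AlgebraicIndependent R t) :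
    LinearIndependent R (fun k : σ → ℕ => ∏ j, t j ^ k j) := by
  have hmon := (MvPolynomial.basisMonomials σ R).linearIndependent.map'
    (MvPolynomial.aeval t).toLinearMap (LinearMap.ker_eq_bot.mpr ht)
  have hprod : (fun k : σ → ℕ => ∏ j, t j ^ k j) =
      (MvPolynomial.aeval t).toLinearMap ∘ MvPolynomial.basisMonomials σ R ∘
        Finsupp.equivFunOnFinite.symm := by
    funext k
    simp [MvPolynomial.aeval_monomial, Finsupp.prod_fintype]
  rw [hprod]
  exact hmon.comp _ Finsupp.equivFunOnFinite.symm.injective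

theorem AlgebraicIndependent.linearIndependent_prod_zpow_s9 {ι σ R K : Type*} [CommRing R]
    [Nontrivial R] [Field K] [Algebra R K] [Finite ι] [Fintype σ] {t : σ → K}
    (ht : AlgebraicIndependent R t) {k : ι → σ → ℤ} (hk : Injective k) :
    LinearIndependent R (fun i => ∏ j, t j ^ k i j) := by
  obtain ⟨B, hB⟩ := Finite.exists_ge (uncurry k)
  let shift : ι → σ → ℕ := fun i j => (k i j - B).toNat
  have hshift : ∀ i j, k i j = shift i j + B := fun i j => by
    have := hB (i, j); simp only [shift, uncurry_apply_pair] at this ⊢; omega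
  have hshift_inj : Injective shift := fun i i' h => hk <| by
    funext j; rw [hshift, hshift, h]
  set c := ∏ j, t j ^ B
  have hc : c ≠ 0 := Finset.prod_ne_zero_iff.mpr fun j _ => zpow_ne_zero _ (ht.ne_zero j)
  have hfactor : (fun i => ∏ j, t j ^ k i j) = fun i => c * ∏ j, t j ^ shift i j := by
    funext i
    simp only [c, hshift, zpow_add₀ (ht.ne_zero _), zpow_natCast, ← Finset.prod_mul_distrib,
      mul_comm]
  rw [hfactor]
  exact (ht.linearIndependent_prod_pow.comp _ hshift_inj).map' (LinearMap.mulLeft R c)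
    (LinearMap.ker_eq_bot.mpr (mul_right_injective₀ hc))

theorem Submodule.exists_linearIndependent_int_span_eq {ι M : Type*} [AddCommGroup M]
    [Module.IsTorsionFree ℤ M] [Finite ι] (z : ι → M) :
    ∃ (n : ℕ) (u : Fin n → M), LinearIndependent ℤ u ∧ span ℤ (range u) = span ℤ (range z) := by
  set V := span ℤ (range z)
  have : Module.Finite ℤ V := Module.Finite.span_of_finite ℤ (finite_range z)
  let b := Module.finBasis ℤ V
  refine ⟨_, V.subtype ∘ b, b.linearIndependent.map' _ V.ker_subtype, ?_⟩
  rw [range_comp, ← map_span, b.span_eq, map_subtype_top]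

theorem isAlgebraic_of_mem_span_int {R A : Type*} [CommRing R] [IsDomain R] [CommRing A]
    [Algebra R A] {s : Set A} (hs : ∀ y ∈ s, IsAlgebraic R y) {x : A} (hx : x ∈ span ℤ s) :
    IsAlgebraic R x := by
  induction hx using span_induction with
  | mem y hy => exact hs y hy
  | zero => exact isAlgebraic_zero
  | add y y' _ _ hy hy' => exact hy.add hy'
  | smul n y _ hy => rw [zsmul_eq_mul]; exact (isAlgebraic_intCast n).mul hy

open Complex (exp)

theorem SchanuelConjecture.algebraicIndependent_exp_s9 (hSch : SchanuelConjecture) {n : ℕ}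
    {u : Fin n → ℂ} (hli : LinearIndependent ℚ u) (halg : ∀ j, IsAlgebraic ℚ (u j)) :
    AlgebraicIndependent ℚ (exp ∘ u) := by
  classical
  obtain ⟨s, hcard, hind⟩ := hSch n u hli
  -- `s` contains no `u j`, these being algebraic, so by counting it consists of all `exp (u j)`.
  have hsub : s ⊆ Finset.univ.map .inr := by
    rintro (j | j) hj
    · exact absurd (halg j) (hind.transcendental ⟨.inl j, hj⟩)
    · simp
  have hs : s = Finset.univ.map .inr :=
    Finset.eq_of_subset_of_card_le hsub (by simpa using hcard)
  have hmem : ∀ j, .inr j ∈ s := fun j => by simp [hs]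
  exact hind.comp (fun j => ⟨.inr j, hmem j⟩) fun j j' h => by simpa using h

theorem SchanuelConjecture.linearIndependent_exp (hSch : SchanuelConjecture) {ι : Type*}
    [Finite ι] {z : ι → ℂ} (halg : ∀ i, IsAlgebraic ℚ (z i)) (hz : Injective z) :
    LinearIndependent (algebraicClosure ℚ ℂ) (fun i => exp (z i)) := by
  obtain ⟨n, u, hu, hspan⟩ := exists_linearIndependent_int_span_eq z
  have hu_alg : ∀ j, IsAlgebraic ℚ (u j) := fun j =>
    isAlgebraic_of_mem_span_int (by rintro _ ⟨i, rfl⟩; exact halg i)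
      (hspan ▸ subset_span (mem_range_self j))
  have ht := (hSch.algebraicIndependent_exp_s9 ((LinearIndependent.iff_fractionRing ℤ ℚ).mp hu)
    hu_alg).algebraicClosure
  choose k hk using fun i =>
    (mem_span_range_iff_exists_fun ℤ).mp (hspan ▸ subset_span (mem_range_self i) :
      z i ∈ span ℤ (range u))
  have hexp : (fun i => exp (z i)) = fun i => ∏ j, exp (u j) ^ k i j := by
    funext i
    simp only [← hk i, Complex.exp_sum, zsmul_eq_mul, Complex.exp_int_mul]
  rw [hexp]
  exact ht.linearIndependent_prod_zpow_s9 fun i i' h => hz <| by rw [← hk i, ← hk i', h]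

theorem exp_sum_ne_zero_at_nonzero_algebraic (hSch : SchanuelConjecture)
    (m : ℕ) (a b : Fin m → ℂ)
    (ha : ∀ i, IsAlgebraic ℚ (a i)) (hb : ∀ i, IsAlgebraic ℚ (b i))
    (hbdist : Function.Injective b) (hane : ∃ i, a i ≠ 0)
    (β : ℂ) (hβ : IsAlgebraic ℚ β) (hβne : β ≠ 0) :
    ∑ i, a i * Complex.exp (b i * β) ≠ 0 := by
  intro h
  obtain ⟨i, hi⟩ := hane
  have hli := hSch.linearIndependent_exp (fun i => (hb i).mul hβ)
    ((mul_left_injective₀ hβne).comp hbdist)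
  have ha_zero := Fintype.linearIndependent_iff.mp hli
    (fun i => ⟨a i, mem_algebraicClosure_iff.mpr (ha i)⟩) h i
  exact hi (congrArg Subtype.val ha_zero)
end

section
/- Let a₁,…,aₘ be algebraic numbers, not all zero, and g₁,…,gₘ pairwise distinct polynomials in ℚ̄[x]. If β is an algebraic number such that exp(g₁(β)),…,exp(gₘ(β)) generate a field of transcendence degree over ℚ equal to the ℚ-linear dimension of the span of g₁(β),…,gₘ(β), and Σᵢ aᵢ exp(gᵢ(β)) = 0, then gᵢ(β) = gⱼ(β) for some i ≠ j. -/
/-!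
Suppose the values `vⱼ = gⱼ(β)` are pairwise distinct and let `s` be the index set given by the
hypothesis. A ℚ-linear relation among the `vᵢ`, `i ∈ s`, would be a multiplicative relation among
their exponentials, so these `vᵢ` are ℚ-linearly independent and, by the dimension count, span all
the `vⱼ`. With a common denominator `N`, every `exp vⱼ` is then a Laurent monomial in the
`uᵢ = exp (vᵢ / N)`, with distinct exponent vectors for distinct `j`. The `uᵢ` are algebraically
independent, since their `N`-th powers are, and stay so over the algebraic numbers; hence the
relation `∑ aⱼ exp vⱼ = 0` forces every `aⱼ` to vanish.
-/

open Function Set Submodule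

theorem AlgebraicIndependent.of_mem_adjoin_range {R A ι : Type*} [CommRing R] [Nontrivial R]
    [CommRing A] [NoZeroDivisors A] [Algebra R A] [Finite ι] {x y : ι → A}
    (hy : AlgebraicIndependent R y) (hyx : ∀ i, y i ∈ Algebra.adjoin R (range x)) :
    AlgebraicIndependent R x := by
  -- `x` generates `B`, whose transcendence degree is at least `#ι` because of `y`.
  set B := Algebra.adjoin R (range x)
  let x' : ι → B := fun i => ⟨x i, Algebra.subset_adjoin (mem_range_self i)⟩
  have hy' : AlgebraicIndependent R fun i => (⟨y i, hyx i⟩ : B) := .of_comp B.val hy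
  have : FaithfulSMul R B :=
    (faithfulSMul_iff_algebraMap_injective R B).mpr hy'.algebraMap_injective
  have : Nontrivial B := hy'.algebraMap_injective.nontrivial
  have hx'_top : Algebra.adjoin R (range x') = ⊤ := by
    rw [← Algebra.adjoin_adjoin_coe_preimage (R := R) (s := range x)]
    congr 1
    ext b
    simp [x', Subtype.ext_iff]
  have : Algebra.IsAlgebraic (Algebra.adjoin R (range x')) B := ⟨fun b => by
    have hb : b ∈ Algebra.adjoin R (range x') := hx'_top ▸ Algebra.mem_top
    exact isAlgebraic_algebraMap (⟨b, hb⟩ : Algebra.adjoin R (range x'))⟩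
  exact (Algebra.IsAlgebraic.isTranscendenceBasis_of_lift_le_trdeg_of_finite R x'
    hy'.lift_cardinalMk_le_trdeg).1.map' (f := B.val) Subtype.val_injective

theorem AlgebraicIndependent.of_pow {R A ι : Type*} [CommRing R] [Nontrivial R]
    [CommRing A] [NoZeroDivisors A] [Algebra R A] [Finite ι] {x : ι → A} (n : ℕ)
    (h : AlgebraicIndependent R fun i => x i ^ n) : AlgebraicIndependent R x :=
  h.of_mem_adjoin_range fun i => pow_mem (Algebra.subset_adjoin (mem_range_self i)) n

section Monomials

variable {K A ι J : Type*} [CommRing K] [Fintype ι] [Fintype J] {u : ι → A}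

theorem AlgebraicIndependent.eq_zero_of_sum_mul_prod_pow_eq_zero [CommRing A] [Algebra K A]
    (hu : AlgebraicIndependent K u) {e : J → ι → ℕ} (he : Injective e) {c : J → K}
    (h : ∑ j, algebraMap K A (c j) * ∏ i, u i ^ e j i = 0) (j : J) : c j = 0 := by
  classical
  let d : J → ι →₀ ℕ := fun j => Finsupp.equivFunOnFinite.symm (e j)
  have hd : Injective d := Finsupp.equivFunOnFinite.symm.injective.comp he
  have hP : ∑ k, MvPolynomial.monomial (d k) (c k) = 0 := by
    refine algebraicIndependent_iff.mp hu _ ?_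
    simpa [d, MvPolynomial.aeval_monomial, Finsupp.prod_fintype] using h
  simpa [MvPolynomial.coeff_sum, MvPolynomial.coeff_monomial, hd.eq_iff] using
    congrArg (MvPolynomial.coeff (d j)) hP

theorem AlgebraicIndependent.eq_zero_of_sum_mul_prod_zpow_eq_zero [Nontrivial K] [Field A]
    [Algebra K A] (hu : AlgebraicIndependent K u) {e : J → ι → ℤ} (he : Injective e) {c : J → K}
    (h : ∑ j, algebraMap K A (c j) * ∏ i, u i ^ e j i = 0) (j : J) : c j = 0 := by
  -- Multiplying the relation by `∏ uᵢ ^ M` makes all exponents nonnegative.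
  obtain ⟨M, hM⟩ := Finite.exists_le fun p : J × ι => -e p.1 p.2
  have hshift : ∀ j, ∏ i, u i ^ (e j i + M).toNat = (∏ i, u i ^ M) * ∏ i, u i ^ e j i := by
    intro j
    rw [← Finset.prod_mul_distrib]
    refine Finset.prod_congr rfl fun i _ => ?_
    rw [← zpow_natCast, ← zpow_add₀ (hu.ne_zero i)]
    have : -e j i ≤ M := hM (j, i)
    congr 1
    omega
  refine hu.eq_zero_of_sum_mul_prod_pow_eq_zero (e := fun j i => (e j i + M).toNat) ?_ ?_ j
  · refine fun j k hjk => he (funext fun i => ?_)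
    have hji : (e j i + M).toNat = (e k i + M).toNat := congrFun hjk i
    have : -e j i ≤ M := hM (j, i)
    have : -e k i ≤ M := hM (k, i)
    omega
  · simp_rw [hshift, mul_left_comm _ (∏ i, u i ^ M), ← Finset.mul_sum, h, mul_zero]

theorem AlgebraicIndependent.eq_zero_of_prod_zpow_eq_one [Nontrivial K] [Field A] [Algebra K A]
    (hu : AlgebraicIndependent K u) {z : ι → ℤ} (h : ∏ i, u i ^ z i = 1) : z = 0 := by
  by_contra hz
  have := hu.eq_zero_of_sum_mul_prod_zpow_eq_zero (e := ![z, 0]) (c := ![1, -1]) ?_ ?_ 0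
  · simp at this
  · intro j k
    fin_cases j <;> fin_cases k <;> simp [hz, eq_comm]
  · simp [Fin.sum_univ_two, h]

end Monomials

theorem exists_nat_mul_eq_intCast {κ : Type*} [Finite κ] (q : κ → ℚ) :
    ∃ N : ℕ, N ≠ 0 ∧ ∃ z : κ → ℤ, ∀ k, q k * N = z k := by
  classical
  cases nonempty_fintype κ
  refine ⟨∏ k, (q k).den, Finset.prod_ne_zero_iff.2 fun k _ => (q k).den_nz,
    fun k => (q k).num * ∏ j ∈ Finset.univ.erase k, (q j).den, fun k => ?_⟩
  rw [← Finset.mul_prod_erase _ _ (Finset.mem_univ k)]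
  push_cast
  rw [← mul_assoc, Rat.mul_den_eq_num]

theorem linearIndependent_of_algebraicIndependent_exp {ι : Type*} [Fintype ι] {v : ι → ℂ}
    (h : AlgebraicIndependent ℚ fun i => Complex.exp (v i)) : LinearIndependent ℚ v := by
  rw [← LinearIndependent.iff_fractionRing ℤ ℚ, Fintype.linearIndependent_iff]
  intro z hz
  refine congrFun (h.eq_zero_of_prod_zpow_eq_one ?_)
  simpa [← Complex.exp_int_mul, ← Complex.exp_sum] using congrArg Complex.exp hz

theorem not_injective_of_sum_mul_exp_eq_zero {ι J : Type*} [Fintype ι] [Fintype J] {w : ι → ℂ}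
    (hw : AlgebraicIndependent ℚ fun i => Complex.exp (w i)) {v : J → ℂ}
    (hv : ∀ j, v j ∈ span ℚ (range w)) {a : J → ℂ} (ha : ∀ j, IsAlgebraic ℚ (a j))
    (hane : ∃ j, a j ≠ 0) (hzero : ∑ j, a j * Complex.exp (v j) = 0) : ¬ Injective v := by
  intro hinj
  choose c hc using fun j => (mem_span_range_iff_exists_fun ℚ).1 (hv j)
  obtain ⟨N, hN, z, hz⟩ := exists_nat_mul_eq_intCast (uncurry c)
  set u := fun i => Complex.exp (w i / N)
  have hu : AlgebraicIndependent (algebraicClosure ℚ ℂ) u := by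
    refine (AlgebraicIndependent.of_pow N ?_).algebraicClosure
    simpa [u, ← Complex.exp_nat_mul, mul_div_cancel₀, hN] using hw
  have hv_z : ∀ j, v j = ∑ i, (z (j, i) : ℂ) * (w i / N) := by
    intro j
    rw [← hc j]
    refine Finset.sum_congr rfl fun i _ => ?_
    have := congrArg (fun q : ℚ => (q : ℂ)) (hz (j, i))
    push_cast [uncurry_apply_pair] at this
    rw [← this, Rat.smul_def]
    field_simp
  have hexp : ∀ j, Complex.exp (v j) = ∏ i, u i ^ z (j, i) := by
    intro j
    simp [hv_z j, Complex.exp_sum, ← Complex.exp_int_mul, u]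
  have hz_inj : Injective (curry z) := fun j k hjk => hinj <| by
    rw [hv_z, hv_z]
    exact Finset.sum_congr rfl fun i _ => by rw [← curry_apply z, hjk, curry_apply]
  obtain ⟨j, hj⟩ := hane
  refine hj (congrArg Subtype.val (hu.eq_zero_of_sum_mul_prod_zpow_eq_zero hz_inj
    (c := fun j => ⟨a j, mem_algebraicClosure_iff.2 (ha j)⟩) ?_ j))
  simpa [← hexp] using hzero

theorem unconditional_collapsing_general (m : ℕ) (a : Fin m → ℂ)
    (ha : ∀ i, IsAlgebraic ℚ (a i)) (hane : ∃ i, a i ≠ 0)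
    (g : Fin m → Polynomial ℂ)
    (β : ℂ)
    (htd_ge : ∃ s : Finset (Fin m),
      s.card = Module.finrank ℚ (Submodule.span ℚ (Set.range fun i => (g i).eval β)) ∧
      AlgebraicIndependent ℚ (fun i : s => Complex.exp ((g i).eval β)))
    (hzero : ∑ i, a i * Complex.exp ((g i).eval β) = 0) :
    ∃ i j, i ≠ j ∧ (g i).eval β = (g j).eval β := by
  obtain ⟨s, hcard, hs⟩ := htd_ge
  have : FiniteDimensional ℚ (span ℚ (range fun i => (g i).eval β)) :=
    .span_of_finite ℚ (finite_range _)
  have hspan :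
      span ℚ (range fun i : s => (g i).eval β) = span ℚ (range fun i => (g i).eval β) :=
    eq_of_le_of_finrank_eq (span_mono (range_subset_iff.2 fun i => mem_range_self _)) <| by
      rw [finrank_span_eq_card (linearIndependent_of_algebraicIndependent_exp hs),
        Fintype.card_coe, hcard]
  obtain ⟨i, j, hij, hne⟩ := not_injective_iff.1 <| not_injective_of_sum_mul_exp_eq_zero hs
    (fun j => hspan ▸ subset_span (mem_range_self j)) ha hane hzero
  exact ⟨i, j, hne, hij⟩

theorem unconditional_collapsing (m : ℕ) (a : Fin m → ℂ)
    (ha : ∀ i, IsAlgebraic ℚ (a i)) (hane : ∃ i, a i ≠ 0)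
    (g : Fin m → Polynomial ℂ) (hg : ∀ i k, IsAlgebraic ℚ ((g i).coeff k))
    (hgdist : ∀ i j, i ≠ j → g i ≠ g j)
    (β : ℂ) (hβ : IsAlgebraic ℚ β)
    (htd_le : ∀ s : Finset (Fin m),
      AlgebraicIndependent ℚ (fun i : s => Complex.exp ((g i).eval β)) →
      s.card ≤ Module.finrank ℚ (Submodule.span ℚ (Set.range fun i => (g i).eval β)))
    (htd_ge : ∃ s : Finset (Fin m),
      s.card = Module.finrank ℚ (Submodule.span ℚ (Set.range fun i => (g i).eval β)) ∧
      AlgebraicIndependent ℚ (fun i : s => Complex.exp ((g i).eval β)))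
    (hzero : ∑ i, a i * Complex.exp ((g i).eval β) = 0) :
    ∃ i j, i ≠ j ∧ (g i).eval β = (g j).eval β :=
  unconditional_collapsing_general m a ha hane g β htd_ge hzero
end

section
/- Assume Schanuel's conjecture for ℂ. Then e = exp(1) and π are algebraically independent over ℚ. -/
open Algebra Complex

section

variable {R A : Type*} [CommRing R] [CommRing A] [Algebra R A]

theorem Transcendental.of_mul_right_isAlgebraic [NoZeroDivisors R] {x y : A}
    (h : Transcendental R (x * y)) (hy : IsAlgebraic R y) : Transcendental R x :=
  fun hx ↦ h (hx.mul hy)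

theorem algebraicIndependent_pair_iff {a b : A} :
    AlgebraicIndependent R ![a, b] ↔ Transcendental R a ∧ Transcendental (adjoin R {a}) b := by
  have himage : (![a, b] : Fin 2 → A) '' {1}ᶜ = {a} := by
    rw [show ({1}ᶜ : Set (Fin 2)) = {0} by ext i; fin_cases i <;> simp, Set.image_singleton]
    rfl
  let : Unique {j : Fin 2 // j ≠ 1} :=
    ⟨⟨⟨0, by decide⟩⟩, fun ⟨j, hj⟩ ↦ Subtype.ext (by change j = 0; omega)⟩
  rw [AlgebraicIndependent.iff_transcendental_adjoin_image 1, algebraicIndependent_unique_type_iff,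
    himage]
  rfl

theorem AlgebraicIndependent.pair_of_mem {ι : Type*} {f : ι → A} {s : Set ι}
    (h : AlgebraicIndependent R fun i : s ↦ f i) {i j : ι} (hi : i ∈ s) (hj : j ∈ s)
    (hij : i ≠ j) : AlgebraicIndependent R ![f i, f j] := by
  have hinj : Function.Injective (![⟨i, hi⟩, ⟨j, hj⟩] : Fin 2 → s) := by
    intro k l
    fin_cases k <;> fin_cases l <;> simp [hij, hij.symm]
  convert h.comp _ hinj using 1
  ext k
  fin_cases k <;> rfl

end

namespace Complex

theorem isAlgebraic_I {R : Type*} [CommRing R] [Nontrivial R] [Algebra R ℂ] : IsAlgebraic R I :=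
  IsAlgebraic.of_pow two_pos (by rw [I_sq]; exact_mod_cast isAlgebraic_intCast (-1))

theorem linearIndependent_one_ofReal_mul_I {t : ℝ} (ht : t ≠ 0) :
    LinearIndependent ℚ ![1, (t : ℂ) * I] := by
  rw [LinearIndependent.pair_iff]
  intro a b hab
  rw [Rat.smul_def, Rat.smul_def, mul_one] at hab
  have hre : (a : ℝ) = 0 := by simpa using congrArg re hab
  have him : (b : ℝ) * t = 0 := by simpa using congrArg im hab
  exact ⟨by exact_mod_cast hre, by exact_mod_cast (mul_eq_zero.1 him).resolve_right ht⟩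

end Complex

theorem SchanuelConjecture.algebraicIndependent_exp_one_pi_mul_I (hSch : SchanuelConjecture) :
    AlgebraicIndependent ℚ ![exp 1, (Real.pi : ℂ) * I] := by
  set z : Fin 2 → ℂ := ![1, (Real.pi : ℂ) * I]
  obtain ⟨s, hcard, halg⟩ := hSch 2 z (linearIndependent_one_ofReal_mul_I Real.pi_ne_zero)
  have hsub : s ⊆ {.inr 0, .inl 1} := by
    intro i hi
    have htr := halg.transcendental ⟨i, hi⟩
    rcases i with i | i <;> fin_cases i
    · exact absurd isAlgebraic_one htr
    · simp
    · simp
    · refine absurd ?_ htr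
      simpa [z, exp_pi_mul_I] using isAlgebraic_intCast (R := ℚ) (A := ℂ) (-1)
  have hs : s = {.inr 0, .inl 1} := Finset.eq_of_subset_of_card_le hsub (by simpa using hcard)
  simpa [z] using halg.pair_of_mem (f := Sum.elim z fun j ↦ exp (z j)) (i := .inr 0) (j := .inl 1)
    (by simp [hs]) (by simp [hs]) (by simp)

theorem e_pi_algebraically_independent (hSch : SchanuelConjecture) :
    AlgebraicIndependent ℚ ![Complex.exp 1, (Real.pi : ℂ)] := by
  obtain ⟨he, hpiI⟩ := algebraicIndependent_pair_iff.1 hSch.algebraicIndependent_exp_one_pi_mul_I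
  exact algebraicIndependent_pair_iff.2 ⟨he, hpiI.of_mul_right_isAlgebraic isAlgebraic_I⟩
end
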